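/- arXiv:1105.4716 — 2 statements merged into one kernel-verified Lean document; each statement's English description precedes it below -/
import Mathlib

section
/- Let H be a complex Hilbert space, let Θ be a bounded, self-adjoint, positive, invertible operator on H, and let Ĥ be a bounded operator on H satisfying Θ Ĥ = Ĥ† Θ. Then the physical norm is preserved by the Schrödinger evolution: for every Ψ ∈ H and every real t, ⟨exp(−i t Ĥ)Ψ, Θ exp(−i t Ĥ)Ψ⟩ = ⟨Ψ, ΘΨ⟩. -/
/-!
Quasi-Hermiticity `Θ Ĥ = Ĥ† Θ` says that `Θ` intertwines `a = -i t Ĥ` with `-a†`, so it also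
intertwines `exp a` with `exp (-a†) = (exp a)†⁻¹`. Hence `(exp a)† Θ (exp a) = Θ`, i.e. the
evolution is an isometry of the form `⟪·, Θ ·⟫`.
-/

open scoped InnerProductSpace

open NormedSpace

section StarExp

variable {𝔸 : Type*} [NormedRing 𝔸] [NormedAlgebra ℚ 𝔸] [CompleteSpace 𝔸] [StarRing 𝔸]
  [ContinuousStar 𝔸]

theorem SemiconjBy.star_exp_mul_mul_exp_eq_self {x a : 𝔸} (h : SemiconjBy x a (-star a)) :
    star (exp a) * x * exp a = x := by
  simpa only [star_exp, neg_neg] using h.exp_neg_mul_mul_exp_eq_self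

end StarExp

namespace ContinuousLinearMap

variable {H : Type*} [NormedAddCommGroup H] [InnerProductSpace ℂ H] [CompleteSpace H]

theorem semiconjBy_neg_I_smul_of_comp_eq_adjoint_comp {Θ A : H →L[ℂ] H}
    (h : Θ.comp A = (adjoint A).comp Θ) (t : ℝ) :
    SemiconjBy Θ ((-(Complex.I * t)) • A) (-star ((-(Complex.I * t)) • A)) := by
  have hstar : star (-(Complex.I * t)) = Complex.I * t := by simp
  rw [star_smul, hstar, ← neg_smul]
  exact SemiconjBy.smul_right h _

theorem inner_map_apply_map_eq_of_adjoint_mul_mul_eq {Θ U : H →L[ℂ] H}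
    (h : adjoint U * Θ * U = Θ) (φ ψ : H) : ⟪U φ, Θ (U ψ)⟫_ℂ = ⟪φ, Θ ψ⟫_ℂ := by
  rw [← adjoint_inner_right, ← mul_apply_eq_comp, ← mul_apply_eq_comp, h]

end ContinuousLinearMap

theorem physical_norm_preserved_general
    {H : Type*} [NormedAddCommGroup H] [InnerProductSpace ℂ H] [CompleteSpace H]
    (Θ : H →L[ℂ] H)
    (Hhat : H →L[ℂ] H)
    (hqh : Θ.comp Hhat = (ContinuousLinearMap.adjoint Hhat).comp Θ)
    (Ψ : H) (t : ℝ) :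
    ⟪NormedSpace.exp ((-(Complex.I * (t : ℂ))) • Hhat) Ψ,
        Θ (NormedSpace.exp ((-(Complex.I * (t : ℂ))) • Hhat) Ψ)⟫_ℂ = ⟪Ψ, Θ Ψ⟫_ℂ :=
  -- the exponential API is stated for normed `ℚ`-algebras
  letI : NormedAlgebra ℚ (H →L[ℂ] H) := NormedAlgebra.restrictScalars ℚ ℂ (H →L[ℂ] H)
  ContinuousLinearMap.inner_map_apply_map_eq_of_adjoint_mul_mul_eq
    (ContinuousLinearMap.semiconjBy_neg_I_smul_of_comp_eq_adjoint_comp hqh t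
      |>.star_exp_mul_mul_exp_eq_self) Ψ Ψ

/-- If `Θ` is a bounded, self-adjoint, positive, invertible metric operator and
`Ĥ` is quasi-Hermitian with respect to `Θ`, then the physical squared norm `⟪Ψ, Θ Ψ⟫` is
preserved by the Schrödinger evolution `exp(-i t Ĥ)`. -/
theorem physical_norm_preserved
    {H : Type*} [NormedAddCommGroup H] [InnerProductSpace ℂ H] [CompleteSpace H]
    (Θ : H →L[ℂ] H) (hsa : IsSelfAdjoint Θ) (hpos : Θ.IsPositive) (hinv : IsUnit Θ)
    (Hhat : H →L[ℂ] H)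
    (hqh : Θ.comp Hhat = (ContinuousLinearMap.adjoint Hhat).comp Θ)
    (Ψ : H) (t : ℝ) :
    ⟪NormedSpace.exp ((-(Complex.I * (t : ℂ))) • Hhat) Ψ,
        Θ (NormedSpace.exp ((-(Complex.I * (t : ℂ))) • Hhat) Ψ)⟫_ℂ = ⟪Ψ, Θ Ψ⟫_ℂ :=
  physical_norm_preserved_general Θ Hhat hqh Ψ t
end

section
/- Let H be a complex Hilbert space, let Θ be a bounded, self-adjoint, positive, invertible operator on H, and let Ĥ be a bounded operator on H satisfying Θ Ĥ = Ĥ† Θ. Then for every real t the evolution operator exp(−i t Ĥ) preserves the physical inner product: ⟨exp(−i t Ĥ)φ, Θ exp(−i t Ĥ)ψ⟩ = ⟨φ, Θψ⟩ for all φ, ψ ∈ H; that is, the Schrödinger time evolution is unitary with respect to the Θ-modified inner product. -/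
open scoped InnerProductSpace

/-! Quasi-Hermiticity `Θ Ĥ = Ĥ† Θ` says that `Θ` intertwines `A = -i t Ĥ` with `-A†`, since `-i t` is
purely imaginary. Summing the power series, `Θ exp A = exp (-A†) Θ`, hence `(exp A)† Θ exp A = Θ`. -/

theorem SemiconjBy.smul_of_star_eq_neg {𝕜 𝔸 : Type*} [CommRing 𝕜] [StarRing 𝕜] [Ring 𝔸]
    [StarRing 𝔸] [Algebra 𝕜 𝔸] [StarModule 𝕜 𝔸] {x a : 𝔸} (h : SemiconjBy x a (star a))
    {c : 𝕜} (hc : star c = -c) : SemiconjBy x (c • a) (-star (c • a)) := by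
  rw [SemiconjBy, star_smul, hc, neg_smul, neg_neg, mul_smul_comm, smul_mul_assoc, h.eq]

theorem SemiconjBy.star_exp_mul_mul_exp_eq_self_s5 {𝔸 : Type*} [NormedRing 𝔸] [NormedAlgebra ℚ 𝔸]
    [CompleteSpace 𝔸] [StarRing 𝔸] [ContinuousStar 𝔸] {x a : 𝔸}
    (h : SemiconjBy x a (-star a)) : star (NormedSpace.exp a) * x * NormedSpace.exp a = x := by
  simpa [NormedSpace.star_exp] using h.exp_neg_mul_mul_exp_eq_self

theorem ContinuousLinearMap.inner_map_map_eq_of_star_mul_mul_eq {H : Type*}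
    [NormedAddCommGroup H] [InnerProductSpace ℂ H] [CompleteSpace H] {Θ U : H →L[ℂ] H}
    (h : star U * Θ * U = Θ) (φ ψ : H) : ⟪U φ, Θ (U ψ)⟫_ℂ = ⟪φ, Θ ψ⟫_ℂ := by
  rw [← adjoint_inner_right]
  exact congrArg (⟪φ, ·⟫_ℂ) (DFunLike.congr_fun h ψ)

theorem evolution_unitary_wrt_metric_inner_general
    {H : Type*} [NormedAddCommGroup H] [InnerProductSpace ℂ H] [CompleteSpace H]
    (Θ : H →L[ℂ] H)
    (Hhat : H →L[ℂ] H)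
    (hqh : Θ.comp Hhat = (ContinuousLinearMap.adjoint Hhat).comp Θ)
    (t : ℝ) (φ ψ : H) :
    ⟪NormedSpace.exp ((-(Complex.I * (t : ℂ))) • Hhat) φ,
        Θ (NormedSpace.exp ((-(Complex.I * (t : ℂ))) • Hhat) ψ)⟫_ℂ = ⟪φ, Θ ψ⟫_ℂ := by
  -- the exponential lemmas are stated over `ℚ`, which has no global instance on operators
  let : NormedAlgebra ℚ (H →L[ℂ] H) := .restrictScalars ℚ ℂ (H →L[ℂ] H)
  have hc : star (-(Complex.I * t)) = -(-(Complex.I * t)) := by simp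
  have hsemiconj : SemiconjBy Θ Hhat (star Hhat) := hqh
  exact ContinuousLinearMap.inner_map_map_eq_of_star_mul_mul_eq
    ((hsemiconj.smul_of_star_eq_neg hc).star_exp_mul_mul_exp_eq_self_s5) φ ψ

/-- If `Θ` is a bounded, self-adjoint, positive, invertible metric operator and
`Ĥ` is quasi-Hermitian with respect to `Θ`, then the Schrödinger evolution `exp(-i t Ĥ)`
preserves the physical inner product `⟪φ, Θ ψ⟫`. -/
theorem evolution_unitary_wrt_metric_inner
    {H : Type*} [NormedAddCommGroup H] [InnerProductSpace ℂ H] [CompleteSpace H]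
    (Θ : H →L[ℂ] H) (hsa : IsSelfAdjoint Θ) (hpos : Θ.IsPositive) (hinv : IsUnit Θ)
    (Hhat : H →L[ℂ] H)
    (hqh : Θ.comp Hhat = (ContinuousLinearMap.adjoint Hhat).comp Θ)
    (t : ℝ) (φ ψ : H) :
    ⟪NormedSpace.exp ((-(Complex.I * (t : ℂ))) • Hhat) φ,
        Θ (NormedSpace.exp ((-(Complex.I * (t : ℂ))) • Hhat) ψ)⟫_ℂ = ⟪φ, Θ ψ⟫_ℂ :=
  evolution_unitary_wrt_metric_inner_general Θ Hhat hqh t φ ψ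
end
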